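/- Let (Ω, F, P) be a complete probability space, C : Ω ⇒ ℝⁿ a measurable set-valued map with nonempty closed convex values, 𝒞 = { x ∈ L²(Ω,F,ℝⁿ) : x(ω) ∈ C(ω) a.s. }, and x ∈ 𝒞. Then the normal cone of 𝒞 at x in L²(Ω,F,ℝⁿ) is N_𝒞(x) = { ξ ∈ L²(Ω,F,ℝⁿ) : ξ(ω) ∈ N_{C(ω)}(x(ω)) a.s. }. -/

import Mathlib

/-!
The inclusion `⊇` is the integral of a pointwise inequality. For `⊆`, let `p ω` be the metric
projection of `x ω + ξ ω` onto `C ω`. It is measurable because, for closed `F`, `p ω ∈ F` iff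
`infEDist (x ω + ξ ω) (C ω ∩ F) ≤ infEDist (x ω + ξ ω) (C ω)`, and both sides are measurable in
`ω` by the measurability of `C`. The variational inequality of the projection gives
`‖p - x‖² ≤ ⟪ξ, p - x⟫` (so also `‖p - x‖ ≤ ‖ξ‖` and `p ∈ L²`), while testing `ξ` against the
selection `p` makes the integral of the right side nonpositive. Hence `p = x` a.s., and the
variational inequality at `x` says that `ξ ω` is normal to `C ω` at `x ω`.
-/

open MeasureTheory RealInnerProductSpace

def normalConeFin {n : ℕ} (S : Set (EuclideanSpace ℝ (Fin n)))
    (x : EuclideanSpace ℝ (Fin n)) : Set (EuclideanSpace ℝ (Fin n)) :=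
  {v | x ∈ S ∧ ∀ y ∈ S, ⟪v, y - x⟫ ≤ 0}

open Metric Set

section MeasurableMultifunction

variable {Ω X : Type*} [MeasurableSpace Ω] [MetricSpace X] {C : Ω → Set X}

theorem measurableSet_inter_nonempty_of_isCompact
    (hC : ∀ U : Set X, IsOpen U → MeasurableSet {ω | (C ω ∩ U).Nonempty})
    (hCcl : ∀ ω, IsClosed (C ω)) {K : Set X} (hK : IsCompact K) :
    MeasurableSet {ω | (C ω ∩ K).Nonempty} := by
  -- a closed set missing the compact `K` also misses one of its thickenings
  have : {ω | (C ω ∩ K).Nonempty} =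
      ⋂ m : ℕ, {ω | (C ω ∩ thickening (1 / (m + 1 : ℝ)) K).Nonempty} := by
    ext ω
    simp only [mem_ofPred_eq, mem_iInter]
    refine ⟨fun h m => h.mono (inter_subset_inter_right _ (self_subset_thickening ?_ K)),
      fun h => ?_⟩
    · positivity
    by_contra hK'
    obtain ⟨δ, hδ, hδK⟩ := hK.exists_thickening_subset_open (hCcl ω).isOpen_compl
      (fun z hz hzC => hK' ⟨z, hzC, hz⟩)
    obtain ⟨m, hm⟩ := exists_nat_one_div_lt hδ
    obtain ⟨z, hzC, hzK⟩ := h m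
    exact hδK (thickening_mono hm.le K hzK) hzC
  rw [this]
  exact .iInter fun m => hC _ isOpen_thickening

variable [ProperSpace X]

theorem measurable_infEDist_inter
    (hC : ∀ U : Set X, IsOpen U → MeasurableSet {ω | (C ω ∩ U).Nonempty})
    (hCcl : ∀ ω, IsClosed (C ω)) {F : Set X} (hF : IsClosed F) (q : X) :
    Measurable fun ω => infEDist q (C ω ∩ F) := by
  refine measurable_of_Iic fun r => ?_
  rcases eq_or_ne r ⊤ with rfl | hr
  · simp
  have : (fun ω => infEDist q (C ω ∩ F)) ⁻¹' Iic r =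
      {ω | (C ω ∩ (F ∩ closedBall q r.toReal)).Nonempty} := by
    ext ω
    change infEDist q (C ω ∩ F) ≤ r ↔ _
    rw [← ENNReal.ofReal_toReal hr, ← mem_cthickening_iff,
      ((hCcl ω).inter hF).cthickening_eq_biUnion_closedBall ENNReal.toReal_nonneg]
    simp [Set.Nonempty, mem_closedBall, dist_comm, and_assoc]
  rw [this]
  exact measurableSet_inter_nonempty_of_isCompact hC hCcl
    ((isCompact_closedBall q _).inter_left hF)

theorem Measurable.infEDist_inter [MeasurableSpace X] [BorelSpace X]
    (hC : ∀ U : Set X, IsOpen U → MeasurableSet {ω | (C ω ∩ U).Nonempty})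
    (hCcl : ∀ ω, IsClosed (C ω)) {F : Set X} (hF : IsClosed F) {g : Ω → X}
    (hg : Measurable g) : Measurable fun ω => infEDist (g ω) (C ω ∩ F) := by
  have h := measurable_uncurry_of_continuous_of_measurable
    (u := fun q ω => infEDist q (C ω ∩ F)) (fun _ => continuous_infEDist)
    (measurable_infEDist_inter hC hCcl hF)
  exact h.comp (f := fun ω => (g ω, ω)) (hg.prodMk measurable_id)

end MeasurableMultifunction

section Projection

variable {E : Type*} [NormedAddCommGroup E] [InnerProductSpace ℝ E]

theorem norm_sub_sq_add_norm_sub_sq_le_of_inner_le_zero {u v w : E}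
    (h : ⟪u - v, w - v⟫ ≤ 0) : ‖u - v‖ ^ 2 + ‖w - v‖ ^ 2 ≤ ‖u - w‖ ^ 2 := by
  have : u - w = (u - v) - (w - v) := by abel
  rw [this, norm_sub_sq_real (u - v) (w - v)]
  linarith

theorem mem_iff_infEDist_inter_le_infEDist [ProperSpace E] {K F : Set E} (hK : IsClosed K)
    (hF : IsClosed F) {u v : E} (hv : v ∈ K) (hvar : ∀ w ∈ K, ⟪u - v, w - v⟫ ≤ 0) :
    v ∈ F ↔ infEDist u (K ∩ F) ≤ infEDist u K := by
  have hdist : ∀ w ∈ K, ‖u - v‖ ^ 2 + ‖w - v‖ ^ 2 ≤ ‖u - w‖ ^ 2 := fun w hw =>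
    norm_sub_sq_add_norm_sub_sq_le_of_inner_le_zero (hvar w hw)
  have hmin : infEDist u K = edist u v := by
    refine le_antisymm (infEDist_le_edist_of_mem hv) (le_infEDist.2 fun w hw => ?_)
    rw [edist_dist, edist_dist, dist_eq_norm, dist_eq_norm]
    exact ENNReal.ofReal_le_ofReal <| (sq_le_sq₀ (norm_nonneg _) (norm_nonneg _)).1 <| by
      nlinarith [hdist w hw, sq_nonneg ‖w - v‖]
  rw [hmin]
  refine ⟨fun hvF => infEDist_le_edist_of_mem ⟨hv, hvF⟩, fun h => ?_⟩
  have hne : (K ∩ F).Nonempty := by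
    by_contra hempty
    rw [not_nonempty_iff_eq_empty.1 hempty, infEDist_empty, top_le_iff] at h
    exact edist_ne_top u v h
  obtain ⟨z, ⟨hzK, hzF⟩, hz⟩ := (hK.inter hF).exists_infDist_eq_dist hne u
  have hzv : ‖u - z‖ ≤ ‖u - v‖ := by
    rw [← dist_eq_norm, ← dist_eq_norm, ← hz, infDist, dist_edist]
    exact ENNReal.toReal_mono (edist_ne_top u v) h
  have : ‖z - v‖ ^ 2 ≤ 0 := by nlinarith [hdist z hzK, norm_nonneg (u - z)]
  rw [sq_nonpos_iff, norm_eq_zero, sub_eq_zero] at this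
  exact this ▸ hzF

theorem sq_norm_sub_le_inner_of_inner_le_zero {x ξ p : E} (h : ⟪x + ξ - p, x - p⟫ ≤ 0) :
    ‖p - x‖ ^ 2 ≤ ⟪ξ, p - x⟫ := by
  have hξ : ξ = (x + ξ - p) + (p - x) := by abel
  have hx : x - p = -(p - x) := (neg_sub p x).symm
  rw [hx, inner_neg_right] at h
  rw [hξ, inner_add_left, real_inner_self_eq_norm_sq]
  linarith

variable [ProperSpace E] [MeasurableSpace E] [BorelSpace E]

theorem exists_measurable_forall_inner_sub_le_zero {Ω : Type*} [MeasurableSpace Ω]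
    {C : Ω → Set E} (hC : ∀ U : Set E, IsOpen U → MeasurableSet {ω | (C ω ∩ U).Nonempty})
    (hCne : ∀ ω, (C ω).Nonempty) (hCcl : ∀ ω, IsClosed (C ω)) (hCconv : ∀ ω, Convex ℝ (C ω))
    {g : Ω → E} (hg : Measurable g) :
    ∃ p : Ω → E, Measurable p ∧ ∀ ω, p ω ∈ C ω ∧ ∀ w ∈ C ω, ⟪g ω - p ω, w - p ω⟫ ≤ 0 := by
  have hproj : ∀ ω, ∃ v ∈ C ω, ∀ w ∈ C ω, ⟪g ω - v, w - v⟫ ≤ 0 := fun ω => by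
    obtain ⟨v, hv, hmin⟩ := exists_norm_eq_iInf_of_complete_convex (hCne ω)
      (hCcl ω).isComplete (hCconv ω) (g ω)
    exact ⟨v, hv, (norm_eq_iInf_iff_real_inner_le_zero (hCconv ω) hv).1 hmin⟩
  choose p hpC hpvar using hproj
  refine ⟨p, measurable_of_isClosed fun F hF => ?_, fun ω => ⟨hpC ω, hpvar ω⟩⟩
  have : p ⁻¹' F = {ω | infEDist (g ω) (C ω ∩ F) ≤ infEDist (g ω) (C ω ∩ univ)} := by
    ext ω
    rw [mem_preimage, mem_ofPred_eq, inter_univ]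
    exact mem_iff_infEDist_inter_le_infEDist (hCcl ω) hF (hpC ω) (hpvar ω)
  rw [this]
  exact measurableSet_le (hg.infEDist_inter hC hCcl hF) (hg.infEDist_inter hC hCcl isClosed_univ)

end Projection

section L2

variable {Ω E : Type*} [MeasurableSpace Ω] {μ : Measure Ω} [NormedAddCommGroup E]
  [InnerProductSpace ℝ E]

theorem MeasureTheory.MemLp.integrable_inner {f g : Ω → E} (hf : MemLp f 2 μ)
    (hg : MemLp g 2 μ) : Integrable (fun ω => ⟪f ω, g ω⟫) μ :=
  (L2.integrable_inner (𝕜 := ℝ) (hf.toLp f) (hg.toLp g)).congr <| by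
    filter_upwards [hf.coeFn_toLp, hg.coeFn_toLp] with ω hfω hgω
    rw [hfω, hgω]

theorem ae_inner_sub_nonpos_of_integral_inner_sub_nonpos [ProperSpace E] [MeasurableSpace E]
    [BorelSpace E] {C : Ω → Set E}
    (hC : ∀ U : Set E, IsOpen U → MeasurableSet {ω | (C ω ∩ U).Nonempty})
    (hCne : ∀ ω, (C ω).Nonempty) (hCcl : ∀ ω, IsClosed (C ω)) (hCconv : ∀ ω, Convex ℝ (C ω))
    {x ξ : Ω → E} (hx : MemLp x 2 μ) (hxC : ∀ᵐ ω ∂μ, x ω ∈ C ω) (hξ : MemLp ξ 2 μ)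
    (hξN : ∀ y : Ω → E, MemLp y 2 μ → (∀ᵐ ω ∂μ, y ω ∈ C ω) →
      ∫ ω, ⟪ξ ω, y ω - x ω⟫ ∂μ ≤ 0) :
    ∀ᵐ ω ∂μ, ∀ w ∈ C ω, ⟪ξ ω, w - x ω⟫ ≤ 0 := by
  have hg : AEMeasurable (x + ξ) μ := (hx.1.add hξ.1).aemeasurable
  obtain ⟨p, hp, hpC⟩ :=
    exists_measurable_forall_inner_sub_le_zero hC hCne hCcl hCconv hg.measurable_mk
  have hproj : ∀ᵐ ω ∂μ, ∀ w ∈ C ω, ⟪x ω + ξ ω - p ω, w - p ω⟫ ≤ 0 := by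
    filter_upwards [hg.ae_eq_mk] with ω hω
    simpa only [← hω, Pi.add_apply] using (hpC ω).2
  have hsq : ∀ᵐ ω ∂μ, ‖p ω - x ω‖ ^ 2 ≤ ⟪ξ ω, p ω - x ω⟫ := by
    filter_upwards [hproj, hxC] with ω hω hxω
    exact sq_norm_sub_le_inner_of_inner_le_zero (hω _ hxω)
  have hpx : MemLp (p - x) 2 μ := by
    refine hξ.of_le (hp.aestronglyMeasurable.sub hx.1) ?_
    filter_upwards [hsq] with ω hω
    rw [Pi.sub_apply]
    nlinarith [real_inner_le_norm (ξ ω) (p ω - x ω), norm_nonneg (p ω - x ω), norm_nonneg (ξ ω)]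
  have hnonneg : 0 ≤ᵐ[μ] fun ω => ⟪ξ ω, p ω - x ω⟫ :=
    hsq.mono fun ω hω => (sq_nonneg _).trans hω
  have hzero : (fun ω => ⟪ξ ω, p ω - x ω⟫) =ᵐ[μ] 0 := by
    refine (integral_eq_zero_iff_of_nonneg_ae hnonneg (hξ.integrable_inner hpx)).1 ?_
    refine le_antisymm ?_ (integral_nonneg_of_ae hnonneg)
    exact hξN p (sub_add_cancel p x ▸ hpx.add hx) (ae_of_all _ fun ω => (hpC ω).1)
  filter_upwards [hproj, hsq, hzero] with ω hω hsqω hzω w hw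
  have hpxω : p ω = x ω := by
    rw [hzω, Pi.zero_apply, sq_nonpos_iff, norm_eq_zero, sub_eq_zero] at hsqω
    exact hsqω
  simpa only [hpxω, add_sub_cancel_left] using hω w hw

end L2

theorem normalCone_of_L2_selections_general
    {Ω : Type*} {n : ℕ} {mF : MeasurableSpace Ω} {μ : Measure Ω}
    (C : Ω → Set (EuclideanSpace ℝ (Fin n)))
    (hCmeas : ∀ A : Set (EuclideanSpace ℝ (Fin n)), IsOpen A →
      MeasurableSet {ω | (C ω ∩ A).Nonempty})
    (hCne : ∀ ω, (C ω).Nonempty) (hCclosed : ∀ ω, IsClosed (C ω))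
    (hCconv : ∀ ω, Convex ℝ (C ω))
    (x : Ω → EuclideanSpace ℝ (Fin n)) (hx : MemLp x 2 μ)
    (hxC : ∀ᵐ ω ∂μ, x ω ∈ C ω) :
    {ξ : Ω → EuclideanSpace ℝ (Fin n) | MemLp ξ 2 μ ∧
        ∀ y : Ω → EuclideanSpace ℝ (Fin n), MemLp y 2 μ → (∀ᵐ ω ∂μ, y ω ∈ C ω) →
          ∫ ω, ⟪ξ ω, y ω - x ω⟫ ∂μ ≤ 0} =
      {ξ : Ω → EuclideanSpace ℝ (Fin n) | MemLp ξ 2 μ ∧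
        ∀ᵐ ω ∂μ, ξ ω ∈ normalConeFin (C ω) (x ω)} := by
  ext ξ
  refine ⟨fun ⟨hξ, hξN⟩ => ⟨hξ, ?_⟩, fun ⟨hξ, hξN⟩ => ⟨hξ, fun y _ hyC => ?_⟩⟩
  · filter_upwards [hxC, ae_inner_sub_nonpos_of_integral_inner_sub_nonpos hCmeas hCne hCclosed
      hCconv hx hxC hξ hξN] with ω hxω hω using ⟨hxω, hω⟩
  · refine integral_nonpos_of_ae ?_
    filter_upwards [hξN, hyC] with ω hξω hyω using hξω.2 _ hyω

/-- The normal cone at `x` of the set `𝒞` of `L²`-selections of a measurable set-valued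
map `C` with nonempty closed convex values consists exactly of the square-integrable
random vectors `ξ` with `ξ(ω) ∈ N_{C(ω)}(x(ω))` a.s. -/
theorem normalCone_of_L2_selections
    {Ω : Type*} {n : ℕ} {mF : MeasurableSpace Ω} {μ : Measure Ω} [IsProbabilityMeasure μ]
    [μ.IsComplete]
    (C : Ω → Set (EuclideanSpace ℝ (Fin n)))
    (hCmeas : ∀ A : Set (EuclideanSpace ℝ (Fin n)), IsOpen A →
      MeasurableSet {ω | (C ω ∩ A).Nonempty})
    (hCne : ∀ ω, (C ω).Nonempty) (hCclosed : ∀ ω, IsClosed (C ω))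
    (hCconv : ∀ ω, Convex ℝ (C ω))
    (x : Ω → EuclideanSpace ℝ (Fin n)) (hx : MemLp x 2 μ)
    (hxC : ∀ᵐ ω ∂μ, x ω ∈ C ω) :
    {ξ : Ω → EuclideanSpace ℝ (Fin n) | MemLp ξ 2 μ ∧
        ∀ y : Ω → EuclideanSpace ℝ (Fin n), MemLp y 2 μ → (∀ᵐ ω ∂μ, y ω ∈ C ω) →
          ∫ ω, ⟪ξ ω, y ω - x ω⟫ ∂μ ≤ 0} =
      {ξ : Ω → EuclideanSpace ℝ (Fin n) | MemLp ξ 2 μ ∧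
        ∀ᵐ ω ∂μ, ξ ω ∈ normalConeFin (C ω) (x ω)} :=
  normalCone_of_L2_selections_general (mF := mF) C hCmeas hCne hCclosed hCconv x hx hxC
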